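/- Let the mixed source X be defined by P_{X^n}(x) = w(1)P_{X₁^n}(x) + w(2)P_{X₂^n}(x) with w(1), w(2) > 0. For i ∈ {1,2} and any real sequence {z_n} and any positive sequence γ_n → 0 with √n·γ_n → ∞: (a) Pr[ −log P_{X^n}(X_i^n)/√n ≥ z_n ] ≥ Pr[ −log P_{X_i^n}(X_i^n)/√n ≥ z_n + γ_n ] − e^{−√n γ_n}, and (b) Pr[ −log P_{X^n}(X_i^n)/√n ≥ z_n ] ≤ Pr[ −log P_{X_i^n}(X_i^n)/√n ≥ z_n − γ_n ]. -/

import Mathlib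

/-- Probability of a set under a (real-valued) distribution. -/
noncomputable def prob {X : Type*} (P : X → ℝ) (S : Set X) : ℝ := ∑' x, S.indicator P x

/-!
On the set where the spectrum of the mixture `P` exceeds that of the component `Q` by `γ`,
`Q ≤ e^{-√n γ} P`; since `P` is a probability distribution, that set has `Q`-probability at most
`e^{-√n γ}`, which gives (a). Conversely `w Q ≤ P` gives `-log P ≤ -log w - log Q`, and the
constant `-log w` is eventually absorbed by `√n γ → ∞`, which gives (b).
-/

section Prob

variable {X : Type*} {q p : X → ℝ}

lemma prob_mono_of_pos (hq0 : ∀ x, 0 ≤ q x) (hq : Summable q) {S T : Set X}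
    (h : ∀ x ∈ S, 0 < q x → x ∈ T) : prob q S ≤ prob q T := by
  refine hq.indicator S |>.tsum_le_tsum (fun x => ?_) (hq.indicator T)
  by_cases hxS : x ∈ S
  · rw [Set.indicator_of_mem hxS]
    rcases le_or_gt (q x) 0 with hqx | hqx
    · exact hqx.trans (Set.indicator_nonneg (fun y _ => hq0 y) x)
    · rw [Set.indicator_of_mem (h x hxS hqx)]
  · rw [Set.indicator_of_notMem hxS]
    exact Set.indicator_nonneg (fun y _ => hq0 y) x

lemma prob_le_one (hq0 : ∀ x, 0 ≤ q x) (hq : HasSum q 1) (S : Set X) : prob q S ≤ 1 := by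
  have := prob_mono_of_pos hq0 hq.summable (S := S) (T := Set.univ) fun _ _ _ => trivial
  rwa [prob, prob, Set.indicator_univ, hq.tsum_eq] at this

lemma prob_le_prob_add_prob_diff (hq0 : ∀ x, 0 ≤ q x) (hq : Summable q) (S T : Set X) :
    prob q S ≤ prob q T + prob q (S \ T) :=
  calc prob q S ≤ prob q (T ∪ S \ T) :=
        prob_mono_of_pos hq0 hq fun x hx _ => (em (x ∈ T)).imp id fun hxT => ⟨hx, hxT⟩
    _ = prob q T + prob q (S \ T) := by
        rw [prob, Set.indicator_union_of_disjoint Set.disjoint_sdiff_right]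
        exact (hq.indicator _).tsum_add (hq.indicator _)

lemma prob_le_mul_prob_of_le_mul (hq : Summable q) (hp : Summable p) {S : Set X} {c : ℝ}
    (h : ∀ x ∈ S, q x ≤ c * p x) : prob q S ≤ c * prob p S := by
  rw [prob, prob, ← tsum_mul_left]
  refine (hq.indicator S).tsum_le_tsum (fun x => ?_) ((hp.indicator S).mul_left c)
  by_cases hx : x ∈ S
  · simpa [Set.indicator_of_mem hx] using h x hx
  · simp [Set.indicator_of_notMem hx]

end Prob

section Spectrum

open Real

lemma le_exp_neg_mul_of_spectrum_gap {a b s z γ : ℝ} (ha : 0 < a) (hb : 0 < b) (hs : 0 < s)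
    (ha_ge : z + γ ≤ -log a / s) (hb_lt : -log b / s < z) : a ≤ exp (-(s * γ)) * b := by
  have hlog : log a ≤ -(s * γ) + log b := by
    rw [le_div_iff₀ hs] at ha_ge
    rw [div_lt_iff₀ hs] at hb_lt
    linarith
  calc a = exp (log a) := (exp_log ha).symm
    _ ≤ exp (-(s * γ) + log b) := exp_le_exp.mpr hlog
    _ = exp (-(s * γ)) * b := by rw [exp_add, exp_log hb]

lemma spectrum_sub_le_of_mul_le {a b w s z γ : ℝ} (ha : 0 < a) (hw : 0 < w) (hab : w * a ≤ b)
    (hs : 0 < s) (hγ : -log w ≤ s * γ) (hz : z ≤ -log b / s) : z - γ ≤ -log a / s := by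
  have hlog : log w + log a ≤ log b := by
    rw [← log_mul hw.ne' ha.ne']
    exact log_le_log (mul_pos hw ha) hab
  rw [le_div_iff₀ hs] at hz ⊢
  linarith

variable {X : Type*} {q p : X → ℝ}

lemma prob_spectrum_diff_le_exp (hq0 : ∀ x, 0 ≤ q x) (hq : HasSum q 1) (hp0 : ∀ x, 0 ≤ p x)
    (hp : HasSum p 1) (hqp : ∀ x, 0 < q x → 0 < p x) {s : ℝ} (hs : 0 ≤ s) (z γ : ℝ) :
    prob q ({x | z + γ ≤ -log (q x) / s} \ {x | z ≤ -log (p x) / s}) ≤ exp (-(s * γ)) := by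
  rcases hs.eq_or_lt with rfl | hs
  -- `s = √0`: the spectra are junk (`_ / 0 = 0`), but the bound is `exp 0 = 1`.
  · simpa using prob_le_one hq0 hq _
  have hgap : ∀ x ∈ {x | z + γ ≤ -log (q x) / s} \ {x | z ≤ -log (p x) / s},
      q x ≤ exp (-(s * γ)) * p x := by
    rintro x ⟨hxq, hxp⟩
    rcases le_or_gt (q x) 0 with hqx | hqx
    · exact hqx.trans (by positivity [hp0 x])
    · exact le_exp_neg_mul_of_spectrum_gap hqx (hqp x hqx) hs hxq (not_le.mp hxp)
  calc _ ≤ exp (-(s * γ)) * prob p _ := prob_le_mul_prob_of_le_mul hq.summable hp.summable hgap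
    _ ≤ exp (-(s * γ)) * 1 := by gcongr; exact prob_le_one hp0 hp _
    _ = exp (-(s * γ)) := mul_one _

lemma prob_spectrum_sub_exp_le (hq0 : ∀ x, 0 ≤ q x) (hq : HasSum q 1) (hp0 : ∀ x, 0 ≤ p x)
    (hp : HasSum p 1) (hqp : ∀ x, 0 < q x → 0 < p x) {s : ℝ} (hs : 0 ≤ s) (z γ : ℝ) :
    prob q {x | z + γ ≤ -log (q x) / s} - exp (-(s * γ)) ≤ prob q {x | z ≤ -log (p x) / s} := by
  linarith [prob_le_prob_add_prob_diff hq0 hq.summable {x | z + γ ≤ -log (q x) / s}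
    {x | z ≤ -log (p x) / s}, prob_spectrum_diff_le_exp hq0 hq hp0 hp hqp hs z γ]

lemma prob_spectrum_le_of_mul_le (hq0 : ∀ x, 0 ≤ q x) (hq : Summable q) {w : ℝ} (hw : 0 < w)
    (hwqp : ∀ x, w * q x ≤ p x) {s γ : ℝ} (hs : 0 < s) (hγ : -log w ≤ s * γ) (z : ℝ) :
    prob q {x | z ≤ -log (p x) / s} ≤ prob q {x | z - γ ≤ -log (q x) / s} :=
  prob_mono_of_pos hq0 hq fun x hx hqx => spectrum_sub_le_of_mul_le hqx hw (hwqp x) hs hγ hx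

end Spectrum

theorem mixture_spectrum_lemma_general (𝒳 : ℕ → Type*)
    (P₁ P₂ : ∀ n, 𝒳 n → ℝ)
    (hP₁0 : ∀ n x, 0 ≤ P₁ n x) (hP₁1 : ∀ n, HasSum (P₁ n) 1)
    (hP₂0 : ∀ n x, 0 ≤ P₂ n x) (hP₂1 : ∀ n, HasSum (P₂ n) 1)
    (w₁ w₂ : ℝ) (hw₁ : 0 < w₁) (hw₂ : 0 < w₂) (hw : w₁ + w₂ = 1)
    (P : ∀ n, 𝒳 n → ℝ) (hP : ∀ n x, P n x = w₁ * P₁ n x + w₂ * P₂ n x)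
    (Q : ∀ n, 𝒳 n → ℝ) (hQ : Q = P₁ ∨ Q = P₂)
    (z : ℕ → ℝ) (γ : ℕ → ℝ)
    (hγtop : Filter.Tendsto (fun n : ℕ => Real.sqrt n * γ n) Filter.atTop Filter.atTop) :
    (∀ n : ℕ,
      prob (Q n) {x | z n + γ n ≤ -Real.log (Q n x) / Real.sqrt n}
          - Real.exp (-(Real.sqrt n * γ n))
        ≤ prob (Q n) {x | z n ≤ -Real.log (P n x) / Real.sqrt n}) ∧
    (∀ᶠ n : ℕ in Filter.atTop,
      prob (Q n) {x | z n ≤ -Real.log (P n x) / Real.sqrt n}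
        ≤ prob (Q n) {x | z n - γ n ≤ -Real.log (Q n x) / Real.sqrt n}) := by
  have hP0 (n x) : 0 ≤ P n x := by
    rw [hP]
    exact add_nonneg (mul_nonneg hw₁.le (hP₁0 n x)) (mul_nonneg hw₂.le (hP₂0 n x))
  have hP1 (n) : HasSum (P n) 1 := by
    simpa [← hP, hw] using ((hP₁1 n).mul_left w₁).add ((hP₂1 n).mul_left w₂)
  obtain ⟨hQ0, hQ1, w, hw0, hwQP⟩ : (∀ n x, 0 ≤ Q n x) ∧ (∀ n, HasSum (Q n) 1) ∧
      ∃ w, 0 < w ∧ ∀ n x, w * Q n x ≤ P n x := by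
    rcases hQ with rfl | rfl
    · exact ⟨hP₁0, hP₁1, w₁, hw₁, fun n x => by rw [hP]; nlinarith [hP₂0 n x]⟩
    · exact ⟨hP₂0, hP₂1, w₂, hw₂, fun n x => by rw [hP]; nlinarith [hP₁0 n x]⟩
  refine ⟨fun n => prob_spectrum_sub_exp_le (hQ0 n) (hQ1 n) (hP0 n) (hP1 n)
    (fun x hx => (mul_pos hw0 hx).trans_le (hwQP n x)) (Real.sqrt_nonneg n) (z n) (γ n), ?_⟩
  filter_upwards [hγtop.eventually_ge_atTop (-Real.log w), Filter.eventually_ge_atTop 1]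
    with n hγn hn
  exact prob_spectrum_le_of_mul_le (hQ0 n) (hQ1 n).summable hw0 (hwQP n) (by positivity) hγn (z n)

/-- Mixture-comparison lemma: the information spectrum of the mixed source is bounded by
the spectrum of each component source. -/
theorem mixture_spectrum_lemma (𝒳 : ℕ → Type*) [∀ n, Countable (𝒳 n)]
    (P₁ P₂ : ∀ n, 𝒳 n → ℝ)
    (hP₁0 : ∀ n x, 0 ≤ P₁ n x) (hP₁1 : ∀ n, HasSum (P₁ n) 1)
    (hP₂0 : ∀ n x, 0 ≤ P₂ n x) (hP₂1 : ∀ n, HasSum (P₂ n) 1)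
    (w₁ w₂ : ℝ) (hw₁ : 0 < w₁) (hw₂ : 0 < w₂) (hw : w₁ + w₂ = 1)
    (P : ∀ n, 𝒳 n → ℝ) (hP : ∀ n x, P n x = w₁ * P₁ n x + w₂ * P₂ n x)
    (Q : ∀ n, 𝒳 n → ℝ) (hQ : Q = P₁ ∨ Q = P₂)
    (z : ℕ → ℝ) (γ : ℕ → ℝ) (hγpos : ∀ n, 0 < γ n)
    (hγ0 : Filter.Tendsto γ Filter.atTop (nhds 0))
    (hγtop : Filter.Tendsto (fun n : ℕ => Real.sqrt n * γ n) Filter.atTop Filter.atTop) :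
    (∀ n : ℕ,
      prob (Q n) {x | z n + γ n ≤ -Real.log (Q n x) / Real.sqrt n}
          - Real.exp (-(Real.sqrt n * γ n))
        ≤ prob (Q n) {x | z n ≤ -Real.log (P n x) / Real.sqrt n}) ∧
    (∀ᶠ n : ℕ in Filter.atTop,
      prob (Q n) {x | z n ≤ -Real.log (P n x) / Real.sqrt n}
        ≤ prob (Q n) {x | z n - γ n ≤ -Real.log (Q n x) / Real.sqrt n}) :=
  mixture_spectrum_lemma_general 𝒳 P₁ P₂ hP₁0 hP₁1 hP₂0 hP₂1 w₁ w₂ hw₁ hw₂ hw P hP Q hQ z γ hγtop
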